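/- The Jacobian determinant of the frequency map with respect to j satisfies det Dω(j) = −2π·α²/(|j|²·τ₁(j)³) + O(1/(|j|·τ₁(j)²)): there exist C > 0 and ε > 0 such that for all j ∈ Ω_ε, |∂₁ω₁(j)·∂₂ω₂(j) − ∂₂ω₁(j)·∂₁ω₂(j) + 2π·α²/(|j|²·τ₁(j)³)| ≤ C/(|j|·τ₁(j)²). -/

import Mathlib

open Real Complex Filter Topology

/-- First partial derivative (direction `1`) of a function on `ℂ ≃ ℝ²`. -/
noncomputable def pd1 (f : ℂ → ℝ) (z : ℂ) : ℝ := fderiv ℝ f z 1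

/-- Second partial derivative (direction `i`) of a function on `ℂ ≃ ℝ²`. -/
noncomputable def pd2 (f : ℂ → ℝ) (z : ℂ) : ℝ := fderiv ℝ f z Complex.I

/-- The slit punctured disc `Ω_r = {j : 0 < |j| < r, ζ ∉ (-∞,0]}`. -/
def slitDisc (r : ℝ) : Set ℂ :=
  {z : ℂ | 0 < ‖z‖ ∧ ‖z‖ < r ∧ ¬(z.re ≤ 0 ∧ z.im = 0)}

/-- The period `τ₁(j) = σ₁(j) - ln|j|`. -/
noncomputable def tau1 (σ₁ : ℂ → ℝ) (z : ℂ) : ℝ := σ₁ z - Real.log (‖z‖)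

/-- The period `τ₂(j) = σ₂(j) + arg ζ`. -/
noncomputable def tau2 (σ₂ : ℂ → ℝ) (z : ℂ) : ℝ := σ₂ z + Complex.arg z

/-- The frequency `ω₁(j) = 2π ∂₁Φ(j) / τ₁(j)`. -/
noncomputable def om1 (σ₁ Φ : ℂ → ℝ) (z : ℂ) : ℝ := 2 * Real.pi * pd1 Φ z / tau1 σ₁ z

/-- The frequency `ω₂(j) = ∂₂Φ(j) - (τ₂(j)/τ₁(j)) ∂₁Φ(j)`. -/
noncomputable def om2 (σ₁ σ₂ Φ : ℂ → ℝ) (z : ℂ) : ℝ :=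
  pd2 Φ z - (tau2 σ₂ z / tau1 σ₁ z) * pd1 Φ z

/-- The Jacobian determinant `det Dω = ∂₁ω₁ ∂₂ω₂ - ∂₂ω₁ ∂₁ω₂` of the frequency map. -/
noncomputable def detDom (σ₁ σ₂ Φ : ℂ → ℝ) (z : ℂ) : ℝ :=
  pd1 (om1 σ₁ Φ) z * pd2 (om2 σ₁ σ₂ Φ) z - pd2 (om1 σ₁ Φ) z * pd1 (om2 σ₁ σ₂ Φ) z

lemma myHasFDerivAt_div {f g : ℂ → ℝ} {f' g' : ℂ →L[ℝ] ℝ} {z : ℂ}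
    (hf : HasFDerivAt f f' z) (hg : HasFDerivAt g g' z) (h : g z ≠ 0) :
    HasFDerivAt (fun w => f w / g w) ((g z)⁻¹ • f' - (f z / (g z) ^ 2) • g') z := by
  have hinv : HasFDerivAt (fun w => (g w)⁻¹) ((-((g z) ^ 2)⁻¹) • g') z :=
    (hasDerivAt_inv h).comp_hasFDerivAt z hg
  have hm : HasFDerivAt (fun w => f w * (g w)⁻¹)
      (f z • ((-((g z) ^ 2)⁻¹) • g') + (g z)⁻¹ • f') z := hf.mul hinv
  have heq : (fun w => f w / g w) = fun w => f w * (g w)⁻¹ := by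
    funext w; rw [div_eq_mul_inv]
  rw [heq]
  convert hm using 1
  ext u
  simp only [ContinuousLinearMap.coe_sub', Pi.sub_apply, ContinuousLinearMap.coe_smul',
    Pi.smul_apply, ContinuousLinearMap.coe_add', Pi.add_apply, smul_eq_mul]
  field_simp
  ring

lemma myHasFDerivAt_logAbs {z : ℂ} (hz : z ∈ Complex.slitPlane) :
    HasFDerivAt (fun w => Real.log (‖w‖))
      (Complex.reCLM.comp
        (((ContinuousLinearMap.id ℂ ℂ).smulRight z⁻¹).restrictScalars ℝ)) z := by
  have h := (Complex.hasDerivAt_log hz).hasFDerivAt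
  have h3 := (Complex.reCLM.hasFDerivAt).comp z (h.restrictScalars ℝ)
  have heq : (fun w => Real.log (‖w‖)) = fun w => (Complex.log w).re :=
    funext fun w => (Complex.log_re w).symm
  rw [heq]; exact h3

lemma myHasFDerivAt_arg {z : ℂ} (hz : z ∈ Complex.slitPlane) :
    HasFDerivAt (fun w => Complex.arg w)
      (Complex.imCLM.comp
        (((ContinuousLinearMap.id ℂ ℂ).smulRight z⁻¹).restrictScalars ℝ)) z := by
  have h := (Complex.hasDerivAt_log hz).hasFDerivAt
  have h3 := (Complex.imCLM.hasFDerivAt).comp z (h.restrictScalars ℝ)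
  have heq : (fun w => Complex.arg w) = fun w => (Complex.log w).im :=
    funext fun w => (Complex.log_im w).symm
  rw [heq]; exact h3

lemma pd_contDiffOn {f : ℂ → ℝ} {U : Set ℂ} (hU : IsOpen U) (hf : ContDiffOn ℝ 2 f U) (u : ℂ) :
    ContDiffOn ℝ 1 (fun z => fderiv ℝ f z u) U := by
  have hd : ContDiffOn ℝ 1 (fderiv ℝ f) U := hf.fderiv_of_isOpen hU (by norm_num)
  exact (ContinuousLinearMap.apply ℝ ℝ u).contDiff.comp_contDiffOn hd

lemma pd_values (σ₁ σ₂ Φ : ℂ → ℝ) {U : Set ℂ} (hUopen : IsOpen U)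
    (hσ₁ : ContDiffOn ℝ 2 σ₁ U) (hσ₂ : ContDiffOn ℝ 2 σ₂ U) (hΦ : ContDiffOn ℝ 2 Φ U)
    {z : ℂ} (hzU : z ∈ U) (hzS : z ∈ Complex.slitPlane) (hτ : tau1 σ₁ z ≠ 0) :
    (pd1 (om1 σ₁ Φ) z = 2*Real.pi*(pd1 (pd1 Φ) z)*(tau1 σ₁ z)⁻¹
      - 2*Real.pi*(pd1 Φ z)*(pd1 σ₁ z - z.re*((‖z‖)⁻¹)^2)*((tau1 σ₁ z)⁻¹)^2)
    ∧ (pd2 (om1 σ₁ Φ) z = 2*Real.pi*(pd2 (pd1 Φ) z)*(tau1 σ₁ z)⁻¹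
      - 2*Real.pi*(pd1 Φ z)*(pd2 σ₁ z - z.im*((‖z‖)⁻¹)^2)*((tau1 σ₁ z)⁻¹)^2)
    ∧ (pd1 (om2 σ₁ σ₂ Φ) z = pd1 (pd2 Φ) z
      - ((pd1 σ₂ z - z.im*((‖z‖)⁻¹)^2)
          - tau2 σ₂ z*(pd1 σ₁ z - z.re*((‖z‖)⁻¹)^2)*(tau1 σ₁ z)⁻¹)*(tau1 σ₁ z)⁻¹*(pd1 Φ z)
      - tau2 σ₂ z*(tau1 σ₁ z)⁻¹*(pd1 (pd1 Φ) z))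
    ∧ (pd2 (om2 σ₁ σ₂ Φ) z = pd2 (pd2 Φ) z
      - ((pd2 σ₂ z + z.re*((‖z‖)⁻¹)^2)
          - tau2 σ₂ z*(pd2 σ₁ z - z.im*((‖z‖)⁻¹)^2)*(tau1 σ₁ z)⁻¹)*(tau1 σ₁ z)⁻¹*(pd1 Φ z)
      - tau2 σ₂ z*(tau1 σ₁ z)⁻¹*(pd2 (pd1 Φ) z)) := by
  have hz0 : z ≠ 0 := Complex.slitPlane_ne_zero hzS
  have habs : ‖z‖ ≠ 0 := norm_ne_zero_iff.mpr hz0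
  have hnsq : Complex.normSq z = ‖z‖ ^ 2 := (Complex.sq_norm z).symm
  -- differentiability of the pieces
  have hdσ₁ : DifferentiableAt ℝ σ₁ z :=
    ((hσ₁.of_le (by norm_num : (1:WithTop ℕ∞) ≤ 2)).differentiableOn one_ne_zero).differentiableAt (hUopen.mem_nhds hzU)
  have hdσ₂ : DifferentiableAt ℝ σ₂ z :=
    ((hσ₂.of_le (by norm_num : (1:WithTop ℕ∞) ≤ 2)).differentiableOn one_ne_zero).differentiableAt (hUopen.mem_nhds hzU)
  have hdA : DifferentiableAt ℝ (pd1 Φ) z :=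
    ((pd_contDiffOn hUopen hΦ 1).differentiableOn one_ne_zero).differentiableAt (hUopen.mem_nhds hzU)
  have hdB : DifferentiableAt ℝ (pd2 Φ) z :=
    ((pd_contDiffOn hUopen hΦ Complex.I).differentiableOn one_ne_zero).differentiableAt
      (hUopen.mem_nhds hzU)
  -- derivatives of tau1, tau2
  have hLτ : HasFDerivAt (tau1 σ₁)
      (fderiv ℝ σ₁ z - Complex.reCLM.comp
        (((ContinuousLinearMap.id ℂ ℂ).smulRight z⁻¹).restrictScalars ℝ)) z :=
    hdσ₁.hasFDerivAt.sub (myHasFDerivAt_logAbs hzS)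
  have hLθ : HasFDerivAt (tau2 σ₂)
      (fderiv ℝ σ₂ z + Complex.imCLM.comp
        (((ContinuousLinearMap.id ℂ ℂ).smulRight z⁻¹).restrictScalars ℝ)) z :=
    hdσ₂.hasFDerivAt.add (myHasFDerivAt_arg hzS)
  -- om1
  have hnum : HasFDerivAt (fun w => 2*Real.pi * pd1 Φ w)
      ((2*Real.pi) • fderiv ℝ (pd1 Φ) z) z := hdA.hasFDerivAt.const_mul (2*Real.pi)
  have hom1 : HasFDerivAt (om1 σ₁ Φ)
      ((tau1 σ₁ z)⁻¹ • ((2*Real.pi) • fderiv ℝ (pd1 Φ) z)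
        - ((2*Real.pi * pd1 Φ z) / (tau1 σ₁ z)^2) •
          (fderiv ℝ σ₁ z - Complex.reCLM.comp
            (((ContinuousLinearMap.id ℂ ℂ).smulRight z⁻¹).restrictScalars ℝ))) z :=
    myHasFDerivAt_div hnum hLτ hτ
  -- quotient tau2/tau1
  have hquot : HasFDerivAt (fun w => tau2 σ₂ w / tau1 σ₁ w)
      ((tau1 σ₁ z)⁻¹ • (fderiv ℝ σ₂ z + Complex.imCLM.comp
          (((ContinuousLinearMap.id ℂ ℂ).smulRight z⁻¹).restrictScalars ℝ))
        - ((tau2 σ₂ z) / (tau1 σ₁ z)^2) •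
          (fderiv ℝ σ₁ z - Complex.reCLM.comp
            (((ContinuousLinearMap.id ℂ ℂ).smulRight z⁻¹).restrictScalars ℝ))) z :=
    myHasFDerivAt_div hLθ hLτ hτ
  have hom2 : HasFDerivAt (om2 σ₁ σ₂ Φ)
      (fderiv ℝ (pd2 Φ) z - ((tau2 σ₂ z / tau1 σ₁ z) • fderiv ℝ (pd1 Φ) z + (pd1 Φ z) •
        ((tau1 σ₁ z)⁻¹ • (fderiv ℝ σ₂ z + Complex.imCLM.comp
            (((ContinuousLinearMap.id ℂ ℂ).smulRight z⁻¹).restrictScalars ℝ))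
          - ((tau2 σ₂ z) / (tau1 σ₁ z)^2) •
            (fderiv ℝ σ₁ z - Complex.reCLM.comp
              (((ContinuousLinearMap.id ℂ ℂ).smulRight z⁻¹).restrictScalars ℝ))))) z :=
    hdB.hasFDerivAt.sub (hquot.mul hdA.hasFDerivAt)
  have hire : (z⁻¹).re = z.re * ((‖z‖)⁻¹)^2 := by
    rw [Complex.inv_re, hnsq, div_eq_mul_inv, ← inv_pow]
  have hiim : (z⁻¹).im = -(z.im * ((‖z‖)⁻¹)^2) := by
    rw [Complex.inv_im, hnsq, neg_div, div_eq_mul_inv, ← inv_pow]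
  have h1re : ((1:ℂ) * z⁻¹).re = z.re * ((‖z‖)⁻¹)^2 := by
    rw [one_mul, Complex.inv_re, hnsq]; rw [div_eq_mul_inv, ← inv_pow]
  have h1im : ((1:ℂ) * z⁻¹).im = -(z.im * ((‖z‖)⁻¹)^2) := by
    rw [one_mul, Complex.inv_im, hnsq]; rw [neg_div, div_eq_mul_inv, ← inv_pow]
  have hIre : (Complex.I * z⁻¹).re = z.im * ((‖z‖)⁻¹)^2 := by
    rw [Complex.mul_re, Complex.I_re, Complex.I_im, Complex.inv_im, hnsq]
    rw [neg_div, div_eq_mul_inv, ← inv_pow]; ring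
  have hIim : (Complex.I * z⁻¹).im = z.re * ((‖z‖)⁻¹)^2 := by
    rw [Complex.mul_im, Complex.I_re, Complex.I_im, Complex.inv_re, hnsq]
    rw [div_eq_mul_inv, ← inv_pow]; ring
  have hτpow : tau1 σ₁ z ^ 2 = (((tau1 σ₁ z)⁻¹)^2)⁻¹ := by
    rw [← inv_pow, inv_inv]
  refine ⟨?_, ?_, ?_, ?_⟩
  · rw [pd1, hom1.fderiv]
    simp only [ContinuousLinearMap.coe_sub', Pi.sub_apply, ContinuousLinearMap.coe_smul',
      Pi.smul_apply, smul_eq_mul, ContinuousLinearMap.coe_comp', Function.comp_apply,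
      ContinuousLinearMap.coe_restrictScalars', ContinuousLinearMap.smulRight_apply,
      ContinuousLinearMap.coe_id', id_eq]
    rw [Complex.reCLM_apply, h1re, div_eq_mul_inv, ← inv_pow]
    simp only [pd1, pd2]
    ring
  · rw [pd2, hom1.fderiv]
    simp only [ContinuousLinearMap.coe_sub', Pi.sub_apply, ContinuousLinearMap.coe_smul',
      Pi.smul_apply, smul_eq_mul, ContinuousLinearMap.coe_comp', Function.comp_apply,
      ContinuousLinearMap.coe_restrictScalars', ContinuousLinearMap.smulRight_apply,
      ContinuousLinearMap.coe_id', id_eq]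
    rw [Complex.reCLM_apply, hIre, div_eq_mul_inv, ← inv_pow]
    simp only [pd1, pd2]
    ring
  · rw [pd1, hom2.fderiv]
    simp only [ContinuousLinearMap.coe_sub', Pi.sub_apply, ContinuousLinearMap.coe_smul',
      Pi.smul_apply, smul_eq_mul, ContinuousLinearMap.coe_comp', Function.comp_apply,
      ContinuousLinearMap.coe_restrictScalars', ContinuousLinearMap.smulRight_apply,
      ContinuousLinearMap.coe_id', id_eq, ContinuousLinearMap.coe_add', Pi.add_apply]
    rw [Complex.reCLM_apply, Complex.imCLM_apply, h1re, h1im, div_eq_mul_inv, div_eq_mul_inv,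
      ← inv_pow]
    simp only [pd1, pd2]
    ring
  · rw [pd2, hom2.fderiv]
    simp only [ContinuousLinearMap.coe_sub', Pi.sub_apply, ContinuousLinearMap.coe_smul',
      Pi.smul_apply, smul_eq_mul, ContinuousLinearMap.coe_comp', Function.comp_apply,
      ContinuousLinearMap.coe_restrictScalars', ContinuousLinearMap.smulRight_apply,
      ContinuousLinearMap.coe_id', id_eq, ContinuousLinearMap.coe_add', Pi.add_apply]
    rw [Complex.reCLM_apply, Complex.imCLM_apply, hIre, hIim, div_eq_mul_inv, div_eq_mul_inv,
      ← inv_pow]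
    simp only [pd1, pd2]
    ring

lemma pd_continuousOn {f : ℂ → ℝ} {U : Set ℂ} (hU : IsOpen U) (hf : ContDiffOn ℝ 1 f U) (u : ℂ) :
    ContinuousOn (fun z => fderiv ℝ f z u) U := by
  have hd : ContDiffOn ℝ 0 (fderiv ℝ f) U := hf.fderiv_of_isOpen hU (by norm_num)
  exact ((ContinuousLinearMap.apply ℝ ℝ u).continuous.comp_continuousOn (contDiffOn_zero.mp hd))

lemma ev_abs_bound {f : ℂ → ℝ} (hf : ContinuousAt f 0) :
    ∀ᶠ z in nhds (0:ℂ), |f z| ≤ |f 0| + 1 := by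
  have h : ∀ᶠ u in nhds (f 0), |u| ≤ |f 0| + 1 := by
    have hmem : Set.Ioo (f 0 - 1) (f 0 + 1) ∈ nhds (f 0) :=
      Ioo_mem_nhds (by linarith) (by linarith)
    filter_upwards [hmem] with u hu
    have h1 := hu.1
    have h2 := hu.2
    have h3 := neg_abs_le (f 0)
    have h4 := le_abs_self (f 0)
    rw [abs_le]
    constructor <;> linarith
  exact Filter.Tendsto.eventually hf h


set_option maxHeartbeats 1000000 in
lemma bound_lemma (K c e τ x y A α A₁ A₂ B₁ B₂ S₁ S₂ T₁ T₂ θ w v : ℝ)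
    (hw : w = e⁻¹) (hv : v = τ⁻¹)
    (hK : 1 ≤ K) (hc : 0 ≤ c) (he : 0 < e) (he1 : e ≤ 1) (hτ : 1 ≤ τ) (heτ : e*τ ≤ 1)
    (hxy : x^2 + y^2 = e^2) (hx : |x| ≤ e) (hy : |y| ≤ e)
    (hA : |A| ≤ K) (hα : |α| ≤ K) (hAα : |A - α| ≤ c*e)
    (hA₁ : |A₁| ≤ K) (hA₂ : |A₂| ≤ K) (hB₁ : |B₁| ≤ K) (hB₂ : |B₂| ≤ K)
    (hS₁ : |S₁| ≤ K) (hS₂ : |S₂| ≤ K) (hT₁ : |T₁| ≤ K) (hT₂ : |T₂| ≤ K) :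
    |(2*Real.pi*A₁*v - 2*Real.pi*A*(S₁-x*w^2)*v^2) *
        (B₂ - ((T₂+x*w^2) - θ*(S₂-y*w^2)*v)*v*A - θ*v*A₂)
      - (2*Real.pi*A₂*v - 2*Real.pi*A*(S₂-y*w^2)*v^2) *
        (B₁ - ((T₁-y*w^2) - θ*(S₁-x*w^2)*v)*v*A - θ*v*A₁)
      + 2*Real.pi*α^2*w^2*v^3|
      ≤ (36*Real.pi*K^4 + 4*Real.pi*K*c)*(w*v^2) := by
  have hπ := Real.pi_pos
  have hK0 : (0:ℝ) < K := lt_of_lt_of_le one_pos hK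
  have hτpos : (0:ℝ) < τ := lt_of_lt_of_le one_pos hτ
  have hwpos : 0 < w := by rw [hw]; positivity
  have hvpos : 0 < v := by rw [hv]; positivity
  have hew : e*w = 1 := by rw [hw]; field_simp
  have hτv : τ*v = 1 := by rw [hv]; field_simp
  have hw1 : 1 ≤ w := by
    have h' : e*w ≤ 1*w := mul_le_mul_of_nonneg_right he1 hwpos.le
    linarith
  have hv1 : v ≤ 1 := by
    have h' : 1*v ≤ τ*v := mul_le_mul_of_nonneg_right hτ hvpos.le
    linarith
  have hetwv : e*τ*(w*v) = 1 := by linear_combination τ*v*hew + hτv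
  have hwv : 1 ≤ w*v := by
    have h' : e*τ*(w*v) ≤ 1*(w*v) := mul_le_mul_of_nonneg_right heτ
      (mul_nonneg hwpos.le hvpos.le)
    linarith
  have hvwv : v ≤ w*v^2 := by
    have h' : 1*v ≤ (w*v)*v := mul_le_mul_of_nonneg_right hwv hvpos.le
    nlinarith [h']
  have hwv2 : (0:ℝ) ≤ w*v^2 := mul_nonneg hwpos.le (sq_nonneg v)
  have h2π : |2*Real.pi| = 2*Real.pi := abs_of_pos (by positivity)
  have hKw : (1:ℝ) ≤ K*w := by
    calc (1:ℝ) = 1*1 := by ring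
      _ ≤ K*w := mul_le_mul hK hw1 one_pos.le hK0.le
  have hprodKw : (0:ℝ) ≤ (K-1)*(w-1) := mul_nonneg (by linarith) (by linarith)
  -- grouped form
  have h1 : (x^2+y^2)*w^2 = 1 := by rw [hxy]; linear_combination (e*w+1)*hew
  have hgroup :
      (2*Real.pi*A₁*v - 2*Real.pi*A*(S₁-x*w^2)*v^2) *
          (B₂ - ((T₂+x*w^2) - θ*(S₂-y*w^2)*v)*v*A - θ*v*A₂)
        - (2*Real.pi*A₂*v - 2*Real.pi*A*(S₂-y*w^2)*v^2) *
          (B₁ - ((T₁-y*w^2) - θ*(S₁-x*w^2)*v)*v*A - θ*v*A₁)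
        + 2*Real.pi*α^2*w^2*v^3
      = 2*Real.pi*(A₁*B₂-A₂*B₁)*v
        - 2*Real.pi*A*((A₁*(T₂+x*w^2)-A₂*(T₁-y*w^2)) + ((S₁-x*w^2)*B₂-(S₂-y*w^2)*B₁))*v^2
        + 2*Real.pi*A^2*(S₁*T₂-S₂*T₁ + (x*(S₁-T₂)+y*(S₂+T₁))*w^2)*v^3
        + 2*Real.pi*(α^2-A^2)*w^2*v^3 := by
    linear_combination (-(2*Real.pi*A^2*v^3*w^2)) * h1
  rw [hgroup]
  clear hgroup
  -- auxiliary bounds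
  have hxw : |x*w^2| ≤ w := by
    rw [abs_mul, abs_of_pos (pow_pos hwpos 2)]
    calc |x| * w^2 ≤ e*w^2 := mul_le_mul_of_nonneg_right hx (sq_nonneg w)
      _ = w := by linear_combination w*hew
  have hyw : |y*w^2| ≤ w := by
    rw [abs_mul, abs_of_pos (pow_pos hwpos 2)]
    calc |y| * w^2 ≤ e*w^2 := mul_le_mul_of_nonneg_right hy (sq_nonneg w)
      _ = w := by linear_combination w*hew
  have hQ₂ : |T₂+x*w^2| ≤ 2*K*w := (abs_add_le _ _).trans (by linarith)
  have hQ₁ : |T₁-y*w^2| ≤ 2*K*w := (abs_sub _ _).trans (by linarith)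
  have hP₁ : |S₁-x*w^2| ≤ 2*K*w := (abs_sub _ _).trans (by linarith)
  have hP₂ : |S₂-y*w^2| ≤ 2*K*w := (abs_sub _ _).trans (by linarith)
  -- term 1
  have hD0 : |A₁*B₂-A₂*B₁| ≤ 2*K^2 := by
    calc |A₁*B₂-A₂*B₁| ≤ |A₁*B₂| + |A₂*B₁| := abs_sub _ _
      _ = |A₁| * |B₂| + |A₂| * |B₁| := by rw [abs_mul, abs_mul]
      _ ≤ K*K + K*K := add_le_add
          (mul_le_mul hA₁ hB₂ (abs_nonneg _) ((abs_nonneg _).trans hA₁))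
          (mul_le_mul hA₂ hB₁ (abs_nonneg _) ((abs_nonneg _).trans hA₂))
      _ = 2*K^2 := by ring
  have hb1 : |2*Real.pi*(A₁*B₂-A₂*B₁)*v| ≤ 4*Real.pi*K^2*(w*v^2) := by
    calc |2*Real.pi*(A₁*B₂-A₂*B₁)*v| = 2*Real.pi* |A₁*B₂-A₂*B₁| *v := by
          rw [abs_mul, abs_mul, h2π, abs_of_pos hvpos]
      _ ≤ 2*Real.pi*(2*K^2)*v := mul_le_mul_of_nonneg_right
          (mul_le_mul_of_nonneg_left hD0 (by positivity)) hvpos.le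
      _ = 4*Real.pi*K^2*v := by ring
      _ ≤ 4*Real.pi*K^2*(w*v^2) := mul_le_mul_of_nonneg_left hvwv (by positivity)
  -- term 2
  have hD1 : |A₁*(T₂+x*w^2)-A₂*(T₁-y*w^2)| ≤ 4*K^2*w := by
    calc |A₁*(T₂+x*w^2)-A₂*(T₁-y*w^2)| ≤ |A₁*(T₂+x*w^2)| + |A₂*(T₁-y*w^2)| := abs_sub _ _
      _ = |A₁| * |T₂+x*w^2| + |A₂| * |T₁-y*w^2| := by rw [abs_mul, abs_mul]
      _ ≤ K*(2*K*w) + K*(2*K*w) := add_le_add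
          (mul_le_mul hA₁ hQ₂ (abs_nonneg _) ((abs_nonneg _).trans hA₁))
          (mul_le_mul hA₂ hQ₁ (abs_nonneg _) ((abs_nonneg _).trans hA₂))
      _ = 4*K^2*w := by ring
  have hD2 : |(S₁-x*w^2)*B₂-(S₂-y*w^2)*B₁| ≤ 4*K^2*w := by
    calc |(S₁-x*w^2)*B₂-(S₂-y*w^2)*B₁| ≤ |(S₁-x*w^2)*B₂| + |(S₂-y*w^2)*B₁| := abs_sub _ _
      _ = |S₁-x*w^2| * |B₂| + |S₂-y*w^2| * |B₁| := by rw [abs_mul, abs_mul]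
      _ ≤ (2*K*w)*K + (2*K*w)*K := add_le_add
          (mul_le_mul hP₁ hB₂ (abs_nonneg _) (by positivity))
          (mul_le_mul hP₂ hB₁ (abs_nonneg _) (by positivity))
      _ = 4*K^2*w := by ring
  have hDsum : |(A₁*(T₂+x*w^2)-A₂*(T₁-y*w^2)) + ((S₁-x*w^2)*B₂-(S₂-y*w^2)*B₁)| ≤ 8*K^2*w :=
    (abs_add_le _ _).trans (by linarith)
  have hb2 : |2*Real.pi*A*((A₁*(T₂+x*w^2)-A₂*(T₁-y*w^2)) + ((S₁-x*w^2)*B₂-(S₂-y*w^2)*B₁))*v^2|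
      ≤ 16*Real.pi*K^3*(w*v^2) := by
    have m1 : |A| * |(A₁*(T₂+x*w^2)-A₂*(T₁-y*w^2)) + ((S₁-x*w^2)*B₂-(S₂-y*w^2)*B₁)|
        ≤ K*(8*K^2*w) :=
      mul_le_mul hA hDsum (abs_nonneg _) ((abs_nonneg _).trans hA)
    calc |2*Real.pi*A*((A₁*(T₂+x*w^2)-A₂*(T₁-y*w^2)) + ((S₁-x*w^2)*B₂-(S₂-y*w^2)*B₁))*v^2|
        = 2*Real.pi*(|A| * |(A₁*(T₂+x*w^2)-A₂*(T₁-y*w^2)) + ((S₁-x*w^2)*B₂-(S₂-y*w^2)*B₁)|)*v^2 := by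
          rw [abs_mul, abs_mul, abs_mul, h2π, abs_of_pos (pow_pos hvpos 2)]; ring
      _ ≤ 2*Real.pi*(K*(8*K^2*w))*v^2 := mul_le_mul_of_nonneg_right
          (mul_le_mul_of_nonneg_left m1 (by positivity)) (sq_nonneg v)
      _ = 16*Real.pi*K^3*(w*v^2) := by ring
  -- term 3
  have hM : |S₁*T₂-S₂*T₁| ≤ 2*K^2 := by
    calc |S₁*T₂-S₂*T₁| ≤ |S₁*T₂| + |S₂*T₁| := abs_sub _ _
      _ = |S₁| * |T₂| + |S₂| * |T₁| := by rw [abs_mul, abs_mul]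
      _ ≤ K*K + K*K := add_le_add
          (mul_le_mul hS₁ hT₂ (abs_nonneg _) ((abs_nonneg _).trans hS₁))
          (mul_le_mul hS₂ hT₁ (abs_nonneg _) ((abs_nonneg _).trans hS₂))
      _ = 2*K^2 := by ring
  have hN : |x*(S₁-T₂)+y*(S₂+T₁)| ≤ 4*K*e := by
    have h1' : |S₁-T₂| ≤ 2*K := (abs_sub _ _).trans (by linarith)
    have h2' : |S₂+T₁| ≤ 2*K := (abs_add_le _ _).trans (by linarith)
    calc |x*(S₁-T₂)+y*(S₂+T₁)| ≤ |x*(S₁-T₂)| + |y*(S₂+T₁)| := abs_add_le _ _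
      _ = |x| * |S₁-T₂| + |y| * |S₂+T₁| := by rw [abs_mul, abs_mul]
      _ ≤ e*(2*K) + e*(2*K) := add_le_add
          (mul_le_mul hx h1' (abs_nonneg _) he.le)
          (mul_le_mul hy h2' (abs_nonneg _) he.le)
      _ = 4*K*e := by ring
  have hF : |S₁*T₂-S₂*T₁ + (x*(S₁-T₂)+y*(S₂+T₁))*w^2| ≤ 6*K^2*w := by
    have hprod1 : (0:ℝ) ≤ K^2*(w-1) := mul_nonneg (sq_nonneg K) (by linarith)
    have hprod2 : (0:ℝ) ≤ K*w*(K-1) := mul_nonneg (mul_nonneg hK0.le hwpos.le) (by linarith)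
    calc |S₁*T₂-S₂*T₁ + (x*(S₁-T₂)+y*(S₂+T₁))*w^2|
        ≤ |S₁*T₂-S₂*T₁| + |(x*(S₁-T₂)+y*(S₂+T₁))*w^2| := abs_add_le _ _
      _ ≤ 2*K^2 + (4*K*e)*w^2 := by
          refine add_le_add hM ?_
          rw [abs_mul, abs_of_pos (pow_pos hwpos 2)]
          exact mul_le_mul_of_nonneg_right hN (sq_nonneg w)
      _ = 2*K^2 + 4*K*w := by linear_combination 4*K*w*hew
      _ ≤ 6*K^2*w := by linarith [hprod1, hprod2]
  have hb3 : |2*Real.pi*A^2*(S₁*T₂-S₂*T₁ + (x*(S₁-T₂)+y*(S₂+T₁))*w^2)*v^3|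
      ≤ 12*Real.pi*K^4*(w*v^2) := by
    have hA2 : |A|^2 ≤ K^2 := pow_le_pow_left₀ (abs_nonneg A) hA 2
    have m1 : |A|^2 * |S₁*T₂-S₂*T₁ + (x*(S₁-T₂)+y*(S₂+T₁))*w^2| ≤ K^2*(6*K^2*w) :=
      mul_le_mul hA2 hF (abs_nonneg _) (by positivity)
    calc |2*Real.pi*A^2*(S₁*T₂-S₂*T₁ + (x*(S₁-T₂)+y*(S₂+T₁))*w^2)*v^3|
        = 2*Real.pi*(|A|^2 * |S₁*T₂-S₂*T₁ + (x*(S₁-T₂)+y*(S₂+T₁))*w^2|)*v^3 := by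
          rw [abs_mul, abs_mul, abs_mul, h2π, _root_.abs_pow, abs_of_pos (pow_pos hvpos 3)]; ring
      _ ≤ 2*Real.pi*(K^2*(6*K^2*w))*v^3 := mul_le_mul_of_nonneg_right
          (mul_le_mul_of_nonneg_left m1 (by positivity)) (by positivity)
      _ = 12*Real.pi*K^4*(w*v^2)*v := by ring
      _ ≤ 12*Real.pi*K^4*(w*v^2)*1 := mul_le_mul_of_nonneg_left hv1
          (mul_nonneg (by positivity) hwv2)
      _ = 12*Real.pi*K^4*(w*v^2) := by ring
  -- term 4
  have h4a : |α^2-A^2| ≤ 2*K*(c*e) := by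
    have hid : α^2 - A^2 = (α-A)*(α+A) := by ring
    rw [hid, abs_mul]
    have h1' : |α - A| ≤ c*e := by rw [abs_sub_comm]; exact hAα
    have h2' : |α + A| ≤ 2*K := (abs_add_le _ _).trans (by linarith)
    calc |α-A| * |α+A| ≤ (c*e)*(2*K) :=
        mul_le_mul h1' h2' (abs_nonneg _) (mul_nonneg hc he.le)
      _ = 2*K*(c*e) := by ring
  have hb4 : |2*Real.pi*(α^2-A^2)*w^2*v^3| ≤ 4*Real.pi*K*c*(w*v^2) := by
    have hKc : (0:ℝ) ≤ 4*Real.pi*K*c :=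
      mul_nonneg (mul_nonneg (by positivity) hK0.le) hc
    calc |2*Real.pi*(α^2-A^2)*w^2*v^3| = 2*Real.pi* |α^2-A^2| *w^2*v^3 := by
          rw [abs_mul, abs_mul, abs_mul, h2π, abs_of_pos (pow_pos hwpos 2),
            abs_of_pos (pow_pos hvpos 3)]
      _ ≤ 2*Real.pi*(2*K*(c*e))*w^2*v^3 := mul_le_mul_of_nonneg_right
          (mul_le_mul_of_nonneg_right
            (mul_le_mul_of_nonneg_left h4a (by positivity)) (sq_nonneg w))
          (by positivity)
      _ = 4*Real.pi*K*c*(w*v^2)*(e*w*v) := by ring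
      _ = 4*Real.pi*K*c*(w*v^2)*v := by
          linear_combination (4*Real.pi*K*c*(w*v^2)*v)*hew
      _ ≤ 4*Real.pi*K*c*(w*v^2)*1 := mul_le_mul_of_nonneg_left hv1
          (mul_nonneg hKc hwv2)
      _ = 4*Real.pi*K*c*(w*v^2) := by ring
  -- combine
  have e1 : K^2 ≤ K^4 := pow_le_pow_right₀ hK (by norm_num)
  have e2 : K^3 ≤ K^4 := pow_le_pow_right₀ hK (by norm_num)
  have g1 : (0:ℝ) ≤ Real.pi*(K^4-K^2)*(w*v^2) :=
    mul_nonneg (mul_nonneg hπ.le (by linarith)) hwv2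
  have g2 : (0:ℝ) ≤ Real.pi*(K^4-K^3)*(w*v^2) :=
    mul_nonneg (mul_nonneg hπ.le (by linarith)) hwv2
  have g3 : (0:ℝ) ≤ Real.pi*K^4*(w*v^2) :=
    mul_nonneg (mul_nonneg hπ.le (by positivity)) hwv2
  calc |2*Real.pi*(A₁*B₂-A₂*B₁)*v
        - 2*Real.pi*A*((A₁*(T₂+x*w^2)-A₂*(T₁-y*w^2)) + ((S₁-x*w^2)*B₂-(S₂-y*w^2)*B₁))*v^2
        + 2*Real.pi*A^2*(S₁*T₂-S₂*T₁ + (x*(S₁-T₂)+y*(S₂+T₁))*w^2)*v^3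
        + 2*Real.pi*(α^2-A^2)*w^2*v^3|
      ≤ |2*Real.pi*(A₁*B₂-A₂*B₁)*v
        - 2*Real.pi*A*((A₁*(T₂+x*w^2)-A₂*(T₁-y*w^2)) + ((S₁-x*w^2)*B₂-(S₂-y*w^2)*B₁))*v^2
        + 2*Real.pi*A^2*(S₁*T₂-S₂*T₁ + (x*(S₁-T₂)+y*(S₂+T₁))*w^2)*v^3|
        + |2*Real.pi*(α^2-A^2)*w^2*v^3| := abs_add_le _ _
    _ ≤ (|2*Real.pi*(A₁*B₂-A₂*B₁)*v
        - 2*Real.pi*A*((A₁*(T₂+x*w^2)-A₂*(T₁-y*w^2)) + ((S₁-x*w^2)*B₂-(S₂-y*w^2)*B₁))*v^2|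
        + |2*Real.pi*A^2*(S₁*T₂-S₂*T₁ + (x*(S₁-T₂)+y*(S₂+T₁))*w^2)*v^3|)
        + |2*Real.pi*(α^2-A^2)*w^2*v^3| :=
          add_le_add_left (abs_add_le _ _) _
    _ ≤ ((|2*Real.pi*(A₁*B₂-A₂*B₁)*v|
        + |2*Real.pi*A*((A₁*(T₂+x*w^2)-A₂*(T₁-y*w^2)) + ((S₁-x*w^2)*B₂-(S₂-y*w^2)*B₁))*v^2|)
        + |2*Real.pi*A^2*(S₁*T₂-S₂*T₁ + (x*(S₁-T₂)+y*(S₂+T₁))*w^2)*v^3|)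
        + |2*Real.pi*(α^2-A^2)*w^2*v^3| := by
          refine add_le_add_left (add_le_add_left ?_ _) _
          exact abs_sub _ _
    _ ≤ ((4*Real.pi*K^2*(w*v^2) + 16*Real.pi*K^3*(w*v^2)) + 12*Real.pi*K^4*(w*v^2))
        + 4*Real.pi*K*c*(w*v^2) :=
          add_le_add (add_le_add (add_le_add hb1 hb2) hb3) hb4
    _ ≤ (36*Real.pi*K^4 + 4*Real.pi*K*c)*(w*v^2) := by linarith [g1, g2, g3]


/-- the Jacobian determinant of the frequency map with respect to `j`
satisfies `det Dω(j) = -2π α²/(|j|² τ₁(j)³) + O(1/(|j| τ₁(j)²))`, with `α = ∂₁Φ(0)`. -/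
theorem frequency_map_jacobian_expansion (σ₁ σ₂ Φ : ℂ → ℝ) (U : Set ℂ)
    (hUopen : IsOpen U) (hU0 : (0 : ℂ) ∈ U)
    (hσ₁ : ContDiffOn ℝ (⊤ : ℕ∞) σ₁ U) (hσ₂ : ContDiffOn ℝ (⊤ : ℕ∞) σ₂ U)
    (hΦ : ContDiffOn ℝ (⊤ : ℕ∞) Φ U)
    (hα : pd1 Φ 0 ≠ 0) :
    ∃ C > 0, ∃ ε > 0, ∀ j ∈ slitDisc ε,
      |detDom σ₁ σ₂ Φ j +
          2 * Real.pi * pd1 Φ 0 ^ 2 / (‖j‖ ^ 2 * tau1 σ₁ j ^ 3)| ≤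
        C / (‖j‖ * tau1 σ₁ j ^ 2) := by
  have hσ₁2 : ContDiffOn ℝ 2 σ₁ U := hσ₁.of_le (WithTop.coe_le_coe.mpr le_top)
  have hσ₂2 : ContDiffOn ℝ 2 σ₂ U := hσ₂.of_le (WithTop.coe_le_coe.mpr le_top)
  have hΦ2 : ContDiffOn ℝ 2 Φ U := hΦ.of_le (WithTop.coe_le_coe.mpr le_top)
  have hσ₁1 : ContDiffOn ℝ 1 σ₁ U := hσ₁.of_le (by simp)
  have hσ₂1 : ContDiffOn ℝ 1 σ₂ U := hσ₂.of_le (by simp)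
  have hU0n : U ∈ nhds (0:ℂ) := hUopen.mem_nhds hU0
  -- continuity at 0 of all coefficient functions
  have cσ₁ : ContinuousAt σ₁ 0 := (hσ₁.continuousOn).continuousAt hU0n
  have cS₁ : ContinuousAt (pd1 σ₁) 0 := (pd_continuousOn hUopen hσ₁1 1).continuousAt hU0n
  have cS₂ : ContinuousAt (pd2 σ₁) 0 :=
    (pd_continuousOn hUopen hσ₁1 Complex.I).continuousAt hU0n
  have cT₁ : ContinuousAt (pd1 σ₂) 0 := (pd_continuousOn hUopen hσ₂1 1).continuousAt hU0n
  have cT₂ : ContinuousAt (pd2 σ₂) 0 :=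
    (pd_continuousOn hUopen hσ₂1 Complex.I).continuousAt hU0n
  have hA1cd : ContDiffOn ℝ 1 (pd1 Φ) U := pd_contDiffOn hUopen hΦ2 1
  have hB1cd : ContDiffOn ℝ 1 (pd2 Φ) U := pd_contDiffOn hUopen hΦ2 Complex.I
  have cA : ContinuousAt (pd1 Φ) 0 := (hA1cd.continuousOn).continuousAt hU0n
  have cA₁ : ContinuousAt (pd1 (pd1 Φ)) 0 :=
    (pd_continuousOn hUopen hA1cd 1).continuousAt hU0n
  have cA₂ : ContinuousAt (pd2 (pd1 Φ)) 0 :=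
    (pd_continuousOn hUopen hA1cd Complex.I).continuousAt hU0n
  have cB₁ : ContinuousAt (pd1 (pd2 Φ)) 0 :=
    (pd_continuousOn hUopen hB1cd 1).continuousAt hU0n
  have cB₂ : ContinuousAt (pd2 (pd2 Φ)) 0 :=
    (pd_continuousOn hUopen hB1cd Complex.I).continuousAt hU0n
  -- Lipschitz-type bound for pd1 Φ near 0
  have hdA0 : DifferentiableAt ℝ (pd1 Φ) 0 :=
    (hA1cd.differentiableOn one_ne_zero).differentiableAt hU0n
  obtain ⟨c, hc0, hcO⟩ := hdA0.isBigO_sub.exists_nonneg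
  have hcEv : ∀ᶠ z in nhds (0:ℂ), |pd1 Φ z - pd1 Φ 0| ≤ c * ‖z‖ := by
    have h := Asymptotics.isBigOWith_iff.mp hcO
    filter_upwards [h] with z hz
    simpa [Real.norm_eq_abs, sub_zero] using hz
  -- the constant K
  set K : ℝ := 1 + (|σ₁ 0|+1) + (|pd1 σ₁ 0|+1) + (|pd2 σ₁ 0|+1) + (|pd1 σ₂ 0|+1)
    + (|pd2 σ₂ 0|+1) + (|pd1 Φ 0|+1) + (|pd1 (pd1 Φ) 0|+1) + (|pd2 (pd1 Φ) 0|+1)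
    + (|pd1 (pd2 Φ) 0|+1) + (|pd2 (pd2 Φ) 0|+1) with hKdef
  have nn1 := abs_nonneg (σ₁ 0)
  have nn2 := abs_nonneg (pd1 σ₁ 0)
  have nn3 := abs_nonneg (pd2 σ₁ 0)
  have nn4 := abs_nonneg (pd1 σ₂ 0)
  have nn5 := abs_nonneg (pd2 σ₂ 0)
  have nn6 := abs_nonneg (pd1 Φ 0)
  have nn7 := abs_nonneg (pd1 (pd1 Φ) 0)
  have nn8 := abs_nonneg (pd2 (pd1 Φ) 0)
  have nn9 := abs_nonneg (pd1 (pd2 Φ) 0)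
  have nn10 := abs_nonneg (pd2 (pd2 Φ) 0)
  have hK1 : 1 ≤ K := by rw [hKdef]; linarith
  have hb1K : |σ₁ 0| + 1 ≤ K := by rw [hKdef]; linarith
  have hb2K : |pd1 σ₁ 0| + 1 ≤ K := by rw [hKdef]; linarith
  have hb3K : |pd2 σ₁ 0| + 1 ≤ K := by rw [hKdef]; linarith
  have hb4K : |pd1 σ₂ 0| + 1 ≤ K := by rw [hKdef]; linarith
  have hb5K : |pd2 σ₂ 0| + 1 ≤ K := by rw [hKdef]; linarith
  have hb6K : |pd1 Φ 0| + 1 ≤ K := by rw [hKdef]; linarith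
  have hb7K : |pd1 (pd1 Φ) 0| + 1 ≤ K := by rw [hKdef]; linarith
  have hb8K : |pd2 (pd1 Φ) 0| + 1 ≤ K := by rw [hKdef]; linarith
  have hb9K : |pd1 (pd2 Φ) 0| + 1 ≤ K := by rw [hKdef]; linarith
  have hb10K : |pd2 (pd2 Φ) 0| + 1 ≤ K := by rw [hKdef]; linarith
  have hbα : |pd1 Φ 0| ≤ K := by linarith
  -- eventual bounds near 0
  have hev : ∀ᶠ z in nhds (0:ℂ),
      |σ₁ z| ≤ K ∧ |pd1 σ₁ z| ≤ K ∧ |pd2 σ₁ z| ≤ K ∧ |pd1 σ₂ z| ≤ K ∧ |pd2 σ₂ z| ≤ K ∧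
      |pd1 Φ z| ≤ K ∧ |pd1 (pd1 Φ) z| ≤ K ∧ |pd2 (pd1 Φ) z| ≤ K ∧ |pd1 (pd2 Φ) z| ≤ K ∧
      |pd2 (pd2 Φ) z| ≤ K ∧ |pd1 Φ z - pd1 Φ 0| ≤ c * ‖z‖ := by
    filter_upwards [ev_abs_bound cσ₁, ev_abs_bound cS₁, ev_abs_bound cS₂, ev_abs_bound cT₁,
      ev_abs_bound cT₂, ev_abs_bound cA, ev_abs_bound cA₁, ev_abs_bound cA₂, ev_abs_bound cB₁,
      ev_abs_bound cB₂, hcEv] with z g1 g2 g3 g4 g5 g6 g7 g8 g9 g10 g11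
    exact ⟨g1.trans hb1K, g2.trans hb2K, g3.trans hb3K, g4.trans hb4K, g5.trans hb5K,
      g6.trans hb6K, g7.trans hb7K, g8.trans hb8K, g9.trans hb9K, g10.trans hb10K, g11⟩
  rw [Metric.eventually_nhds_iff] at hev
  obtain ⟨δ₁, hδ₁, hPnear⟩ := hev
  -- a ball inside U
  obtain ⟨rU, hrU, hball⟩ := Metric.mem_nhds_iff.mp hU0n
  -- t * (K - log t) → 0
  have hlog1 : Tendsto (fun t:ℝ => Real.log t * t) (nhdsWithin 0 (Set.Ioi 0)) (nhds 0) := by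
    have h := tendsto_log_mul_rpow_nhdsGT_zero (one_pos (α := ℝ))
    simpa [Real.rpow_one] using h
  have hlin : Tendsto (fun t:ℝ => K*t) (nhdsWithin 0 (Set.Ioi 0)) (nhds 0) := by
    have h : Tendsto (fun t:ℝ => K*t) (nhds 0) (nhds (K*0)) :=
      (continuous_const.mul continuous_id).tendsto 0
    rw [mul_zero] at h
    exact h.mono_left nhdsWithin_le_nhds
  have hT : Tendsto (fun t:ℝ => t*(K - Real.log t)) (nhdsWithin 0 (Set.Ioi 0)) (nhds 0) := by
    have h := hlin.sub hlog1
    rw [sub_zero] at h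
    exact h.congr (fun t => by ring)
  have hT1 : ∀ᶠ t in nhdsWithin (0:ℝ) (Set.Ioi 0), t*(K - Real.log t) < 1 :=
    hT.eventually_lt_const one_pos
  rw [eventually_nhdsWithin_iff, Metric.eventually_nhds_iff] at hT1
  obtain ⟨δ₃, hδ₃, hQnear⟩ := hT1
  have hK0 : (0:ℝ) < K := lt_of_lt_of_le one_pos hK1
  refine ⟨36*Real.pi*K^4 + 4*Real.pi*K*c, ?_,
    min (min δ₁ δ₃) (min rU (min 1 (Real.exp (-(K+1))))), ?_, ?_⟩
  · have h1 : (0:ℝ) < 36*Real.pi*K^4 :=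
      mul_pos (by positivity : (0:ℝ) < 36*Real.pi) (pow_pos hK0 4)
    have h2 : (0:ℝ) ≤ 4*Real.pi*K*c :=
      mul_nonneg (mul_nonneg (by positivity : (0:ℝ) ≤ 4*Real.pi) hK0.le) hc0
    linarith
  · exact lt_min (lt_min hδ₁ hδ₃) (lt_min hrU (lt_min one_pos (Real.exp_pos _)))
  · intro j hj
    obtain ⟨hj0, hjlt, hjs⟩ := hj
    have hjδ₁ : ‖j‖ < δ₁ :=
      lt_of_lt_of_le hjlt (le_trans (min_le_left _ _) (min_le_left _ _))
    have hjδ₃ : ‖j‖ < δ₃ :=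
      lt_of_lt_of_le hjlt (le_trans (min_le_left _ _) (min_le_right _ _))
    have hjrU : ‖j‖ < rU :=
      lt_of_lt_of_le hjlt (le_trans (min_le_right _ _) (min_le_left _ _))
    have hj1 : ‖j‖ < 1 :=
      lt_of_lt_of_le hjlt (le_trans (min_le_right _ _)
        (le_trans (min_le_right _ _) (min_le_left _ _)))
    have hjexp : ‖j‖ < Real.exp (-(K+1)) :=
      lt_of_lt_of_le hjlt (le_trans (min_le_right _ _)
        (le_trans (min_le_right _ _) (min_le_right _ _)))
    have hjU : j ∈ U := hball (by
      rw [Metric.mem_ball, Complex.dist_eq, sub_zero]; exact hjrU)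
    have hjS : j ∈ Complex.slitPlane := by
      rw [Complex.mem_slitPlane_iff]
      push_neg at hjs
      rcases lt_or_ge 0 j.re with h|h
      · exact Or.inl h
      · exact Or.inr (hjs h)
    obtain ⟨g1,g2,g3,g4,g5,g6,g7,g8,g9,g10,g11⟩ := hPnear
      (show dist j 0 < δ₁ by rw [Complex.dist_eq, sub_zero]; exact hjδ₁)
    have hτdef : tau1 σ₁ j = σ₁ j - Real.log (‖j‖) := rfl
    have hlogj : Real.log (‖j‖) < -(K+1) := by
      rw [Real.log_lt_iff_lt_exp hj0]; exact hjexp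
    have hτ1 : 1 ≤ tau1 σ₁ j := by
      rw [hτdef]
      have := (abs_le.mp g1).1
      linarith
    have heτ : ‖j‖ * tau1 σ₁ j ≤ 1 := by
      have hq := hQnear (show dist (‖j‖) 0 < δ₃ by
          rw [Real.dist_eq, sub_zero, _root_.abs_of_nonneg (norm_nonneg j)]; exact hjδ₃)
        (Set.mem_Ioi.mpr hj0)
      have hτle : tau1 σ₁ j ≤ K - Real.log (‖j‖) := by
        rw [hτdef]
        have := (abs_le.mp g1).2
        linarith
      calc ‖j‖ * tau1 σ₁ j
          ≤ ‖j‖ * (K - Real.log (‖j‖)) :=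
            mul_le_mul_of_nonneg_left hτle (norm_nonneg j)
        _ ≤ 1 := le_of_lt hq
    obtain ⟨hp1, hp2, hq1, hq2⟩ :=
      pd_values σ₁ σ₂ Φ hUopen hσ₁2 hσ₂2 hΦ2 hjU hjS (by linarith)
    have hxy : j.re^2 + j.im^2 = (‖j‖)^2 := by
      rw [Complex.sq_norm, Complex.normSq_apply]; ring
    have hene : ‖j‖ ≠ 0 := ne_of_gt hj0
    have hτne : tau1 σ₁ j ≠ 0 := by linarith
    rw [detDom, hp1, hp2, hq1, hq2]
    have hrw1 : 2 * Real.pi * pd1 Φ 0 ^ 2 / (‖j‖ ^ 2 * tau1 σ₁ j ^ 3)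
        = 2*Real.pi*(pd1 Φ 0)^2*((‖j‖)⁻¹)^2*((tau1 σ₁ j)⁻¹)^3 := by
      field_simp
    have hrw2 : (36*Real.pi*K^4 + 4*Real.pi*K*c) / (‖j‖ * tau1 σ₁ j ^ 2)
        = (36*Real.pi*K^4 + 4*Real.pi*K*c)*((‖j‖)⁻¹*((tau1 σ₁ j)⁻¹)^2) := by
      field_simp
    rw [hrw1, hrw2]
    exact bound_lemma K c (‖j‖) (tau1 σ₁ j) j.re j.im
      (pd1 Φ j) (pd1 Φ 0) (pd1 (pd1 Φ) j) (pd2 (pd1 Φ) j) (pd1 (pd2 Φ) j) (pd2 (pd2 Φ) j)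
      (pd1 σ₁ j) (pd2 σ₁ j) (pd1 σ₂ j) (pd2 σ₂ j) (tau2 σ₂ j)
      ((‖j‖)⁻¹) ((tau1 σ₁ j)⁻¹) rfl rfl
      hK1 hc0 hj0 hj1.le hτ1 heτ hxy
      (Complex.abs_re_le_norm j) (Complex.abs_im_le_norm j)
      g6 hbα g11 g7 g8 g9 g10 g2 g3 g4 g5
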